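/- arXiv:1911.00434 — 5 statements merged into one kernel-verified Lean document; each statement's English description precedes it below -/
import Mathlib

section
/- Let G = (V_G, E_G) be a graph and H = (V_H, E_H) a finite graph. If every finite induced subgraph of G admits a graph homomorphism into H, then G admits a graph homomorphism into H. -/
namespace SimpleGraph

def Subgraph.homInduce {V : Type*} {G : SimpleGraph V} (G' : G.Subgraph) {s : Set V}
    (hs : G'.verts ⊆ s) : G'.coe →g G.induce s where
  toFun v := ⟨v, hs v.2⟩
  map_rel' := G'.adj_sub

end SimpleGraph

/-- Compactness for graph homomorphisms into a finite graph: if every finite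
induced subgraph of `G` has a homomorphism into the finite graph `H`, then so does `G`. -/
theorem stmt_2 {V W : Type*} [Finite W] (G : SimpleGraph V) (H : SimpleGraph W)
    (h : ∀ s : Finset V, Nonempty (G.induce (↑s : Set V) →g H)) :
    Nonempty (G →g H) :=
  G.nonempty_hom_of_forall_finite_subgraph_hom fun G' hG' =>
    (h hG'.toFinset).some.comp (G'.homInduce hG'.coe_toFinset.superset)
end

section
/- Let G₁ and G₂ be graphs with χ(G₁) = k < ω and χ(G₂) infinite (G₂ has no proper coloring with finitely many colors). Then the chromatic number of the tensor product G₁ × G₂ equals k. -/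
/-!
Projecting to the first factor gives `χ(G × H) ≤ χ(G)`. Conversely, let `c` be an `n`-coloring
of `G × H`. By compactness (De Bruijn–Erdős) it suffices to `n`-color every finite subgraph of
`G`, so let `G` be finite and suppose it is not `n`-colorable. Then `y ↦ c(·, y)` is a coloring
of `H` by the finitely many maps `V → Fin n`: if `y ~ y'` had equal slices, the common slice
would `n`-color `G`, since `x ~ x'` gives `c(x, y) ≠ c(x', y') = c(x', y)`. This contradicts
`χ(H) = ∞`.
-/

/-- The tensor (categorical) product of two simple graphs. -/
def tensorProd {V₁ V₂ : Type*} (G₁ : SimpleGraph V₁) (G₂ : SimpleGraph V₂) :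
    SimpleGraph (V₁ × V₂) where
  Adj p q := G₁.Adj p.1 q.1 ∧ G₂.Adj p.2 q.2
  symm := ⟨fun p q h => ⟨G₁.adj_symm h.1, G₂.adj_symm h.2⟩⟩
  loopless := ⟨fun p h => G₁.irrefl h.1⟩

namespace tensorProd

variable {V₁ V₂ W₁ W₂ : Type*} {G₁ : SimpleGraph V₁} {G₂ : SimpleGraph V₂}
  {H₁ : SimpleGraph W₁} {H₂ : SimpleGraph W₂}

variable (G₁ G₂) in
def fst : tensorProd G₁ G₂ →g G₁ := ⟨Prod.fst, And.left⟩

def map (f : G₁ →g H₁) (g : G₂ →g H₂) : tensorProd G₁ G₂ →g tensorProd H₁ H₂ :=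
  ⟨Prod.map f g, fun h => ⟨f.map_adj h.1, g.map_adj h.2⟩⟩

end tensorProd

namespace SimpleGraph

variable {V W α : Type*} {G : SimpleGraph V} {H : SimpleGraph W} {n : ℕ}

theorem colorable_of_forall_finite_subgraph_colorable
    (h : ∀ G' : G.Subgraph, G'.verts.Finite → G'.coe.Colorable n) : G.Colorable n :=
  nonempty_hom_of_forall_finite_subgraph_hom fun G' hG' => (h G' hG').some

def Coloring.tensorProdSlices (c : (tensorProd G H).Coloring α) (hG : IsEmpty (G.Coloring α)) :
    H.Coloring (V → α) :=
  Coloring.mk (fun y x => c (x, y)) fun {y _} hyy' hslice =>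
    hG.false <| Coloring.mk (fun x => c (x, y)) fun hxx' hcx =>
      c.valid ⟨hxx', hyy'⟩ (hcx.trans (congrFun hslice _))

theorem Colorable.of_tensorProd_of_finite [Finite V] (hH : H.chromaticNumber = ⊤)
    (hc : (tensorProd G H).Colorable n) : G.Colorable n := by
  classical
  by_contra hG
  obtain ⟨c⟩ := hc
  have := Fintype.ofFinite V
  have hHcol := (c.tensorProdSlices (not_nonempty_iff.mp hG)).colorable
  exact chromaticNumber_ne_top_iff_exists.mpr ⟨_, hHcol⟩ hH

theorem Colorable.of_tensorProd (hH : H.chromaticNumber = ⊤)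
    (hc : (tensorProd G H).Colorable n) : G.Colorable n :=
  colorable_of_forall_finite_subgraph_colorable fun G' hG' =>
    have := hG'.to_subtype
    .of_tensorProd_of_finite hH (hc.of_hom (tensorProd.map G'.hom .id))

theorem chromaticNumber_tensorProd_of_chromaticNumber_eq_top (hH : H.chromaticNumber = ⊤) :
    (tensorProd G H).chromaticNumber = G.chromaticNumber :=
  le_antisymm (chromaticNumber_mono_of_hom (tensorProd.fst G H))
    (chromaticNumber_le_of_forall_imp fun _ => Colorable.of_tensorProd hH)

end SimpleGraph

/-- Hajnal's theorem: if `χ(G₁) = k` is finite and `χ(G₂)` is infinite, then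
the chromatic number of the tensor product `G₁ × G₂` equals `k`. -/
theorem stmt_6 {V₁ V₂ : Type*} (G₁ : SimpleGraph V₁) (G₂ : SimpleGraph V₂)
    (k : ℕ) (h₁ : G₁.chromaticNumber = k) (h₂ : G₂.chromaticNumber = ⊤) :
    (tensorProd G₁ G₂).chromaticNumber = k := by
  rw [SimpleGraph.chromaticNumber_tensorProd_of_chromaticNumber_eq_top h₂, h₁]
end

section
/- Let (P, ≤) be a partially ordered set in which every chain is finite and every antichain is countable. If P is well-orderable, then P is countable. -/
/-!
Finite chains make `<` well-founded in both directions. If `s` is uncountable, it is covered by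
the sets `Ici m` for its countably many minimal elements `m` (an antichain), so some `s ∩ Ioi m`
is uncountable. Applying this to `Ioi m` for a maximal `m` with `Ioi m` uncountable produces a
larger such element, a contradiction.
-/

open Set

section

variable {α : Type*} [PartialOrder α]

theorem wellFoundedLT_of_isChain_finite (hchain : ∀ c : Set α, IsChain (· ≤ ·) c → c.Finite) :
    WellFoundedLT α := by
  refine ⟨RelEmbedding.wellFounded_iff_isEmpty.2 ⟨fun f ↦ ?_⟩⟩
  have hf : StrictAnti f := fun _ _ h ↦ f.map_rel_iff.2 h
  exact infinite_range_of_injective hf.injective (hchain _ hf.antitone.isChain_range)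

theorem wellFoundedGT_of_isChain_finite (hchain : ∀ c : Set α, IsChain (· ≤ ·) c → c.Finite) :
    WellFoundedGT α :=
  wellFoundedLT_of_isChain_finite (α := αᵒᵈ) fun c hc ↦ hchain c hc.symm

theorem exists_mem_not_countable_inter_Ioi [WellFoundedLT α]
    (hanti : ∀ a : Set α, IsAntichain (· ≤ ·) a → a.Countable) {s : Set α} (hs : ¬ s.Countable) :
    ∃ x ∈ s, ¬ (s ∩ Ioi x).Countable := by
  by_contra! h
  have hcover : s ⊆ ⋃ m ∈ {x | Minimal (· ∈ s) x}, insert m (s ∩ Ioi m) := by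
    intro x hx
    obtain ⟨m, hmx, hm⟩ := exists_minimal_le_of_wellFoundedLT (· ∈ s) x hx
    refine mem_biUnion hm ?_
    rcases hmx.eq_or_lt with rfl | hlt
    exacts [mem_insert _ _, Or.inr ⟨hx, hlt⟩]
  have hminimal := hanti _ (setOfPred_minimal_antichain (· ∈ s))
  exact hs ((hminimal.biUnion fun m hm ↦ (h m hm.prop).insert m).mono hcover)

theorem countable_of_isChain_finite_of_isAntichain_countable
    (hchain : ∀ c : Set α, IsChain (· ≤ ·) c → c.Finite)
    (hanti : ∀ a : Set α, IsAntichain (· ≤ ·) a → a.Countable) :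
    Countable α := by
  have := wellFoundedLT_of_isChain_finite hchain
  have := wellFoundedGT_of_isChain_finite hchain
  by_contra huniv
  rw [← countable_univ_iff] at huniv
  obtain ⟨x, -, hx⟩ := exists_mem_not_countable_inter_Ioi hanti huniv
  obtain ⟨m, hm⟩ := exists_maximal_of_wellFoundedGT (fun x ↦ ¬ (Ioi x).Countable)
    ⟨x, by rwa [univ_inter] at hx⟩
  obtain ⟨y, hmy, hy⟩ := exists_mem_not_countable_inter_Ioi hanti hm.prop
  have hy' : ¬ (Ioi y).Countable := fun h ↦ hy (h.mono inter_subset_right)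
  exact (hm.le_of_ge hy' hmy.le).not_gt hmy

end

theorem stmt_9_general {P : Type*} [PartialOrder P]
    (hchain : ∀ c : Set P, IsChain (· ≤ ·) c → c.Finite)
    (hanti : ∀ a : Set P, IsAntichain (· ≤ ·) a → a.Countable) :
    Countable P :=
  countable_of_isChain_finite_of_isAntichain_countable hchain hanti

/-- A well-orderable poset in which every chain is finite and every antichain is
countable is countable. -/
theorem stmt_9 {P : Type*} [PartialOrder P]
    (hwo : ∃ r : P → P → Prop, IsWellOrder P r)
    (hchain : ∀ c : Set P, IsChain (· ≤ ·) c → c.Finite)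
    (hanti : ∀ a : Set P, IsAntichain (· ≤ ·) a → a.Countable) :
    Countable P :=
  stmt_9_general hchain hanti
end

section
/- Every partially ordered set without a maximal element has two disjoint cofinal subsets. -/
/-!
By Zorn's lemma there is a maximal family of strictly increasing sequences with pairwise disjoint
ranges. If `P` has no maximal element, every `p` lies strictly below some term of some sequence
of the family: otherwise a strictly increasing sequence starting above `p` could be added to it.
The terms of even index and the terms of odd index are then two disjoint cofinal sets.
-/

open Set

theorem exists_maximal_pairwiseDisjoint {ι α : Type*} [PartialOrder α] [OrderBot α] (f : ι → α) :
    ∃ s : Set ι, Maximal (fun s : Set ι => s.PairwiseDisjoint f) s :=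
  zorn_subset _ fun c hc hchain =>
    ⟨⋃₀ c, (hchain.pairwiseDisjoint_sUnion f).2 hc, fun _ => subset_sUnion_of_mem⟩

theorem exists_orderEmbedding_gt {P : Type*} [Preorder P] [NoMaxOrder P] (p : P) :
    ∃ g : ℕ ↪o P, ∀ n, p < g n := by
  obtain ⟨q, hpq⟩ := exists_gt p
  obtain ⟨g, hg, hg0⟩ := Nat.exists_strictMono' q
  exact ⟨OrderEmbedding.ofStrictMono g hg, fun n =>
    hpq.trans_le (hg0 ▸ hg.monotone n.zero_le)⟩

theorem exists_lt_apply_of_maximal_pairwiseDisjoint_range {P : Type*} [Preorder P]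
    [NoMaxOrder P] {𝒞 : Set (ℕ ↪o P)}
    (h𝒞 : Maximal (fun 𝒞 : Set (ℕ ↪o P) => 𝒞.PairwiseDisjoint fun e => range e) 𝒞) (p : P) :
    ∃ e ∈ 𝒞, ∃ m, p < e m := by
  by_contra! hnone
  obtain ⟨g, hg⟩ := exists_orderEmbedding_gt p
  have hdisj : ∀ e ∈ 𝒞, g ≠ e → Disjoint (range g) (range e) := by
    rintro e he -
    refine disjoint_left.2 ?_
    rintro _ ⟨n, rfl⟩ ⟨m, hm⟩
    exact hnone e he m (hm ▸ hg n)
  have hg𝒞 : g ∈ 𝒞 := h𝒞.mem_of_prop_insert (h𝒞.prop.insert hdisj)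
  exact hnone g hg𝒞 0 (hg 0)

theorem disjoint_iUnion_range_even_odd {ι α : Type*} {s : Set ι} {e : ι → ℕ → α}
    (he : ∀ i ∈ s, Function.Injective (e i)) (hs : s.PairwiseDisjoint fun i => range (e i)) :
    Disjoint (⋃ i ∈ s, range fun n => e i (2 * n)) (⋃ i ∈ s, range fun n => e i (2 * n + 1)) := by
  simp only [disjoint_iUnion_left, disjoint_iUnion_right]
  refine fun i hi j hj => disjoint_left.2 ?_
  rintro _ ⟨m, rfl⟩ ⟨n, hn⟩
  obtain rfl : i = j := by
    by_contra hij
    exact disjoint_left.1 (hs hi hj hij) ⟨_, hn⟩ ⟨_, rfl⟩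
  have := he i hi hn
  omega

/-- Every partially ordered set without a maximal element has two disjoint
cofinal subsets. -/
theorem stmt_11 {P : Type*} [PartialOrder P] (h : ∀ p : P, ∃ q : P, p < q) :
    ∃ C₁ C₂ : Set P, Disjoint C₁ C₂ ∧ (∀ p : P, ∃ c ∈ C₁, p ≤ c) ∧
      (∀ p : P, ∃ c ∈ C₂, p ≤ c) := by
  have : NoMaxOrder P := ⟨h⟩
  obtain ⟨𝒞, h𝒞⟩ := exists_maximal_pairwiseDisjoint fun e : ℕ ↪o P => range e
  have hcofinal := exists_lt_apply_of_maximal_pairwiseDisjoint_range h𝒞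
  refine ⟨⋃ e ∈ 𝒞, range fun n => e (2 * n), ⋃ e ∈ 𝒞, range fun n => e (2 * n + 1),
    disjoint_iUnion_range_even_odd (fun e _ => e.injective) h𝒞.prop, fun p => ?_, fun p => ?_⟩
  · obtain ⟨e, he, m, hpm⟩ := hcofinal p
    exact ⟨_, mem_biUnion he ⟨m, rfl⟩, hpm.le.trans (e.monotone (by omega))⟩
  · obtain ⟨e, he, m, hpm⟩ := hcofinal p
    exact ⟨_, mem_biUnion he ⟨m, rfl⟩, hpm.le.trans (e.monotone (by omega))⟩
end

section
/- Let (P, <) be a partially ordered set and k a natural number such that P has no antichain of size k+1 but has at least one antichain of size k. Then P can be partitioned into k chains. -/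
/-!
Finite case (Galvin's induction): delete a maximal element `a` of a finite set `s` of width
`≤ k` and colour the rest by `k` chains. If the rest still has antichains of size `k`, each of
them meets every colour class; let `b i` be the largest element of class `i` lying on such an
antichain. The `b i` form an antichain, so by the width bound `a` lies above some `b i`, and
`a` together with the part of class `i` below `b i` is a chain whose removal from `s` leaves no
antichain of size `k`; induct on the size of `s`.

Infinite case: chain colourings of the finite subsets with `k` colours glue to one of all of
`P` by compactness of `P → Fin k`.
-/

open Finset

theorem exists_forall_rel_of_forall_finset {P α : Type*} [Finite α] (R : P → P → α → α → Prop)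
    (h : ∀ s : Finset P, ∃ f : P → α, ∀ x ∈ s, ∀ y ∈ s, R x y (f x) (f y)) :
    ∃ f : P → α, ∀ x y, R x y (f x) (f y) := by
  classical
  let _ : TopologicalSpace α := ⊥
  have : DiscreteTopology α := ⟨rfl⟩
  let Z : Finset P → Set (P → α) := fun s => {f | ∀ x ∈ s, ∀ y ∈ s, R x y (f x) (f y)}
  have hZ : ∀ s, IsClosed (Z s) := fun s => by
    simp only [Z, Set.ofPred_forall]
    exact isClosed_biInter fun x _ => isClosed_biInter fun y _ =>
      (isClosed_discrete {p : α × α | R x y p.1 p.2}).preimage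
        (f := fun g : P → α => (g x, g y)) (by fun_prop)
  have hdir : Directed (· ⊇ ·) Z := fun s t =>
    ⟨s ∪ t, fun f hf x hx y hy => hf x (mem_union_left t hx) y (mem_union_left t hy),
      fun f hf x hx y hy => hf x (mem_union_right s hx) y (mem_union_right s hy)⟩
  obtain ⟨f, hf⟩ := IsCompact.nonempty_iInter_of_directed_nonempty_isCompact_isClosed Z hdir h
    (fun s => (hZ s).isCompact) hZ
  exact ⟨f, fun x y => Set.mem_iInter.mp hf {x, y} x (by simp) y (by simp)⟩

section

variable {P : Type*} [PartialOrder P]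

def IsChainColoring {ι : Type*} (f : P → ι) (s : Set P) : Prop :=
  ∀ x ∈ s, ∀ y ∈ s, f x = f y → x ≤ y ∨ y ≤ x

def WidthLE (s : Finset P) (k : ℕ) : Prop :=
  ∀ t ⊆ s, IsAntichain (· ≤ ·) (t : Set P) → #t ≤ k

theorem WidthLE.mono {s t : Finset P} {k : ℕ} (hs : WidthLE s k) (hts : t ⊆ s) : WidthLE t k :=
  fun u hut => hs u (hut.trans hts)

theorem WidthLE.one_le {s : Finset P} {k : ℕ} (hs : WidthLE s k) {a : P} (ha : a ∈ s) : 1 ≤ k :=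
  hs {a} (singleton_subset_iff.mpr ha) (by simp)

namespace IsChainColoring

theorem isChain_fiber {ι : Type*} {f : P → ι} {s : Set P} (hf : IsChainColoring f s) (i : ι) :
    IsChain (· ≤ ·) {x | x ∈ s ∧ f x = i} :=
  fun x hx y hy _ => hf x hx.1 y hy.1 (hx.2.trans hy.2.symm)

theorem injOn_of_isAntichain {ι : Type*} {f : P → ι} {s t : Set P} (hf : IsChainColoring f s)
    (hts : t ⊆ s) (ht : IsAntichain (· ≤ ·) t) : Set.InjOn f t := by
  intro x hx y hy hxy
  by_contra hne
  rcases hf x (hts hx) y (hts hy) hxy with h | h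
  exacts [ht hx hy hne h, ht hy hx (Ne.symm hne) h]

theorem ite_mem_chain [DecidableEq P] {s t : Finset P} {g : P → ℕ} {m : ℕ}
    (hg : IsChainColoring g s) (hgm : ∀ x ∈ s, g x < m) (ht : IsChain (· ≤ ·) (t : Set P)) :
    IsChainColoring (fun x => if x ∈ t then m else g x) ↑(s ∪ t) := by
  intro x hx y hy hxy
  rw [mem_coe, mem_union] at hx hy
  by_cases hxt : x ∈ t <;> by_cases hyt : y ∈ t <;> simp only [hxt, hyt, if_true, if_false] at hxy
  · exact ht.total hxt hyt
  · exact absurd hxy (hgm y (hy.resolve_right hyt)).ne'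
  · exact absurd hxy (hgm x (hx.resolve_right hxt)).ne
  · exact hg x (hx.resolve_right hxt) y (hy.resolve_right hyt) hxy

theorem exists_mem_antichain_eq {f : P → ℕ} {s t : Finset P} {k : ℕ}
    (hf : IsChainColoring f s) (hfk : ∀ x ∈ s, f x < k) (hts : t ⊆ s)
    (ht : IsAntichain (· ≤ ·) (t : Set P)) (htk : #t = k) {i : ℕ} (hi : i < k) :
    ∃ x ∈ t, f x = i := by
  have hsurj : Set.SurjOn f t (range k) :=
    surjOn_of_injOn_of_card_le f (fun x hx => by simpa using hfk x (hts hx))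
      (hf.injOn_of_isAntichain (coe_subset.mpr hts) ht) (by simp [htk])
  simpa using hsurj (by simpa using hi)

theorem exists_greatest_on_card_antichains {f : P → ℕ} {u : Finset P} {k : ℕ}
    (hf : IsChainColoring f u) (hfk : ∀ x ∈ u, f x < k)
    (h₀ : ∃ t ⊆ u, IsAntichain (· ≤ ·) (t : Set P) ∧ #t = k) :
    ∃ b : Fin k → P, (∀ i, b i ∈ u ∧ f (b i) = i) ∧ IsAntichain (· ≤ ·) (Set.range b) ∧
      ∀ t ⊆ u, IsAntichain (· ≤ ·) (t : Set P) → #t = k →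
        ∀ i : Fin k, ∀ x ∈ t, f x = i → x ≤ b i := by
  classical
  obtain ⟨t₀, ht₀u, ht₀, ht₀k⟩ := h₀
  let M : Finset P := u.filter fun x => ∃ t ⊆ u, IsAntichain (· ≤ ·) (t : Set P) ∧ #t = k ∧ x ∈ t
  have hM : ∀ t ⊆ u, IsAntichain (· ≤ ·) (t : Set P) → #t = k → ∀ x ∈ t, x ∈ M :=
    fun t htu ht htk x hx => mem_filter.mpr ⟨htu hx, t, htu, ht, htk, hx⟩
  have hmax : ∀ i : Fin k, ∃ b, Maximal (· ∈ M.filter (f · = i)) b := fun i => by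
    obtain ⟨x, hx, hfx⟩ := hf.exists_mem_antichain_eq hfk ht₀u ht₀ ht₀k i.2
    exact exists_maximal ⟨x, mem_filter.mpr ⟨hM t₀ ht₀u ht₀ ht₀k x hx, hfx⟩⟩
  choose b hb using hmax
  have hbM i : b i ∈ M ∧ f (b i) = i := mem_filter.mp (hb i).1
  have hbu i : b i ∈ u ∧ f (b i) = i := ⟨(mem_filter.mp (hbM i).1).1, (hbM i).2⟩
  have htop : ∀ t ⊆ u, IsAntichain (· ≤ ·) (t : Set P) → #t = k →
      ∀ i : Fin k, ∀ x ∈ t, f x = i → x ≤ b i := by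
    intro t htu ht htk i x hx hfx
    rcases hf x (htu hx) (b i) (hbu i).1 (hfx.trans (hbu i).2.symm) with h | h
    · exact h
    · exact ((hb i).eq_of_ge (mem_filter.mpr ⟨hM t htu ht htk x hx, hfx⟩) h).le
  refine ⟨b, hbu, ?_, htop⟩
  rintro _ ⟨i, rfl⟩ _ ⟨j, rfl⟩ hne hle
  -- a maximum antichain through `b j` meets colour `i` below `b i ≤ b j`
  obtain ⟨t, htu, ht, htk, hbt⟩ := (mem_filter.mp (hbM j).1).2
  obtain ⟨x, hxt, hfx⟩ := hf.exists_mem_antichain_eq hfk htu ht htk i.2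
  have hxb : x ≠ b j := by
    rintro rfl
    exact hne (congrArg b (Fin.ext (hfx.symm.trans (hbu j).2)))
  exact ht hxt hbt hxb ((htop t htu ht htk i x hxt hfx).trans hle)

end IsChainColoring

theorem WidthLE.exists_chain_widthLE_sdiff [DecidableEq P] {s : Finset P} {k : ℕ} {a : P}
    (hs : WidthLE s k) (ha : Maximal (· ∈ s) a) {f : P → ℕ} (hf : IsChainColoring f (s.erase a))
    (hfk : ∀ x ∈ s.erase a, f x < k) :
    ∃ K ⊆ s, a ∈ K ∧ IsChain (· ≤ ·) (K : Set P) ∧ WidthLE (s \ K) (k - 1) := by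
  classical
  by_cases hwidth : WidthLE (s.erase a) (k - 1)
  · exact ⟨{a}, singleton_subset_iff.mpr ha.1, mem_singleton_self a, by simp,
      by rwa [sdiff_singleton_eq_erase]⟩
  have h₀ : ∃ t ⊆ s.erase a, IsAntichain (· ≤ ·) (t : Set P) ∧ #t = k := by
    simp only [WidthLE, not_forall, not_le] at hwidth
    obtain ⟨t, hts, ht, htk⟩ := hwidth
    exact ⟨t, hts, ht, le_antisymm (hs t (hts.trans (erase_subset a s)) ht) (by omega)⟩
  obtain ⟨b, hbu, hb, htop⟩ := hf.exists_greatest_on_card_antichains hfk h₀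
  have hbs i : b i ∈ s := mem_of_mem_erase (hbu i).1
  have hba : ∃ i, b i ≤ a := by
    by_contra! hba
    have hbinj : Function.Injective b := fun i j hij =>
      Fin.ext ((hbu i).2.symm.trans (hij ▸ (hbu j).2))
    have haA : a ∉ univ.image b := by
      simpa using fun i => ne_of_mem_erase (hbu i).1
    have hA : IsAntichain (· ≤ ·) (↑(insert a (univ.image b)) : Set P) := by
      rw [coe_insert, coe_image, coe_univ, Set.image_univ]
      refine hb.insert (fun _ ⟨i, hi⟩ _ => hi ▸ hba i) (fun _ ⟨i, hi⟩ hne hle => ?_)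
      exact hne (hi ▸ ha.eq_of_ge (hbs i) (hi ▸ hle)).symm
    have := hs _ (insert_subset ha.1 (image_subset_iff.mpr fun i _ => hbs i)) hA
    rw [card_insert_of_notMem haA, card_image_of_injective _ hbinj, card_univ,
      Fintype.card_fin] at this
    omega
  obtain ⟨i, hia⟩ := hba
  let K := insert a ((s.erase a).filter fun x => f x = i ∧ x ≤ b i)
  refine ⟨K, insert_subset ha.1 ((filter_subset _ _).trans (erase_subset a s)),
    mem_insert_self _ _, ?_, ?_⟩
  · rw [coe_insert]
    refine IsChain.insert ((hf.isChain_fiber i).mono fun x hx => ?_) fun y hy _ => ?_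
    · exact ⟨(mem_filter.mp hx).1, (mem_filter.mp hx).2.1⟩
    · exact Or.inr ((mem_filter.mp hy).2.2.trans hia)
  · intro t hts ht
    by_contra! hlt
    have htk : #t = k := le_antisymm (hs t (hts.trans sdiff_subset) ht) (by omega)
    have htu : t ⊆ s.erase a := fun x hx =>
      mem_erase.mpr ⟨fun hxa => (mem_sdiff.mp (hts hx)).2 (hxa ▸ mem_insert_self a _),
        (mem_sdiff.mp (hts hx)).1⟩
    obtain ⟨x, hxt, hfx⟩ := hf.exists_mem_antichain_eq hfk htu ht htk i.2
    exact (mem_sdiff.mp (hts hxt)).2 (mem_insert_of_mem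
      (mem_filter.mpr ⟨htu hxt, hfx, htop t htu ht htk i x hxt hfx⟩))

theorem WidthLE.exists_isChainColoring {s : Finset P} {k : ℕ} (hs : WidthLE s k) :
    ∃ f : P → ℕ, (∀ x ∈ s, f x < k) ∧ IsChainColoring f s := by
  classical
  induction s using Finset.strongInduction generalizing k with
  | H s ih =>
  obtain rfl | hne := s.eq_empty_or_nonempty
  · exact ⟨fun _ => 0, by simp, by simp [IsChainColoring]⟩
  obtain ⟨a, ha⟩ := s.exists_maximal hne
  obtain ⟨f, hfk, hf⟩ := ih _ (erase_ssubset ha.1) (hs.mono (erase_subset a s))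
  obtain ⟨K, hKs, haK, hK, hsK⟩ := hs.exists_chain_widthLE_sdiff ha hf hfk
  obtain ⟨g, hgk, hg⟩ := ih _ (sdiff_ssubset hKs ⟨a, haK⟩) hsK
  have hk := hs.one_le ha.1
  refine ⟨fun x => if x ∈ K then k - 1 else g x, fun x hx => ?_, ?_⟩
  · dsimp only
    split_ifs with hxK
    · omega
    · have := hgk x (mem_sdiff.mpr ⟨hx, hxK⟩)
      omega
  · simpa only [sdiff_union_of_subset hKs] using hg.ite_mem_chain hgk hK

end

theorem stmt_13_general {P : Type*} [PartialOrder P] (k : ℕ)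
    (h₁ : ¬ ∃ s : Finset P, IsAntichain (· ≤ ·) (↑s : Set P) ∧ s.card = k + 1) :
    ∃ f : P → Fin k, ∀ i : Fin k, IsChain (· ≤ ·) {x : P | f x = i} := by
  have hwidth (s : Finset P) : WidthLE s k := fun t _ ht => by
    by_contra! hk
    obtain ⟨u, hut, hu⟩ := exists_subset_card_eq hk
    exact h₁ ⟨u, ht.subset (coe_subset.mpr hut), hu⟩
  obtain rfl | hk := k.eq_zero_or_pos
  · have : IsEmpty P := ⟨fun x => by simpa using (hwidth {x}).one_le (mem_singleton_self x)⟩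
    exact ⟨isEmptyElim, fun i => i.elim0⟩
  obtain ⟨f, hf⟩ := exists_forall_rel_of_forall_finset
    (fun x y (i j : Fin k) => i = j → x ≤ y ∨ y ≤ x) fun s => by
      obtain ⟨f, hfk, hf⟩ := (hwidth s).exists_isChainColoring
      refine ⟨fun x => if h : f x < k then ⟨f x, h⟩ else ⟨0, hk⟩,
        fun x hx y hy hxy => hf x hx y hy ?_⟩
      simpa [hfk x hx, hfk y hy] using hxy
  exact ⟨f, fun i x hx y hy _ => hf x y (hx.trans hy.symm)⟩

/-- Dilworth's decomposition theorem for posets of finite width `k`: if `P` has no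
antichain of size `k + 1` but has an antichain of size `k`, then `P` can be
partitioned into `k` chains. -/
theorem stmt_13 {P : Type*} [PartialOrder P] (k : ℕ)
    (h₁ : ¬ ∃ s : Finset P, IsAntichain (· ≤ ·) (↑s : Set P) ∧ s.card = k + 1)
    (h₂ : ∃ s : Finset P, IsAntichain (· ≤ ·) (↑s : Set P) ∧ s.card = k) :
    ∃ f : P → Fin k, ∀ i : Fin k, IsChain (· ≤ ·) {x : P | f x = i} :=
  stmt_13_general k h₁
end
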